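/- If A ⪯ₙ₊₁ B (A is an (n+1)-elementary substructure of B), then there exists a structure C such that B embeds n-elementarily into C and A embeds elementarily into C, compatibly with the inclusion of A into B. -/

import Mathlib

open FirstOrder

universe u

namespace InfinitaryForcing

variable (L : FirstOrder.Language.{u, u})

/-- Infinitary formulas of `L_{∞,ω}`: set-indexed conjunctions and disjunctions,
finitary quantification, free variables among `Fin n`. -/
inductive InfForm : ℕ → Type (u + 1)
  | equal {n : ℕ} (t₁ t₂ : L.Term (Fin n)) : InfForm n
  | rel {n l : ℕ} (R : L.Relations l) (ts : Fin l → L.Term (Fin n)) : InfForm n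
  | not {n : ℕ} (φ : InfForm n) : InfForm n
  | disj {n : ℕ} {ι : Type u} (Φ : ι → InfForm n) : InfForm n
  | conj {n : ℕ} {ι : Type u} (Φ : ι → InfForm n) : InfForm n
  | ex {n : ℕ} (φ : InfForm (n + 1)) : InfForm n
  | all {n : ℕ} (φ : InfForm (n + 1)) : InfForm n

variable {L}

/-- Tarskian satisfaction for infinitary formulas. -/
def Realize : ∀ {n : ℕ}, InfForm L n → ∀ (M : Type u), L.Structure M → (Fin n → M) → Prop
  | _, .equal t₁ t₂, _M, S, v => letI := S; t₁.realize v = t₂.realize v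
  | _, .rel R ts, _M, S, v => letI := S; Language.Structure.RelMap R fun i => (ts i).realize v
  | _, .not φ, M, S, v => ¬ Realize φ M S v
  | _, .disj Φ, M, S, v => ∃ i, Realize (Φ i) M S v
  | _, .conj Φ, M, S, v => ∀ i, Realize (Φ i) M S v
  | _, .ex φ, M, S, v => ∃ b : M, Realize φ M S (Fin.snoc v b)
  | _, .all φ, M, S, v => ∀ b : M, Realize φ M S (Fin.snoc v b)

/-- Elementary embeddings, with the structures made explicit. -/
abbrev ElemEmb (M N : Type u) (SM : L.Structure M) (SN : L.Structure N) : Type u :=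
  @FirstOrder.Language.ElementaryEmbedding L M N SM SN

/-- The strong forcing relation `A ⊩ ψ(ā)`, where conditions are structures
ordered by elementary extension. -/
def Forces : ∀ {n : ℕ}, InfForm L n → ∀ (M : Type u), L.Structure M → (Fin n → M) → Prop
  | _, .equal t₁ t₂, _M, S, v => letI := S; t₁.realize v = t₂.realize v
  | _, .rel R ts, _M, S, v => letI := S; Language.Structure.RelMap R fun i => (ts i).realize v
  | _, .not φ, M, S, v =>
      ∀ (N : Type u) (SN : L.Structure N) (f : ElemEmb M N S SN),
        ¬ Forces φ N SN (fun i => f.toFun (v i))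
  | _, .disj Φ, M, S, v => ∃ i, Forces (Φ i) M S v
  | _, .conj Φ, M, S, v =>
      ∀ (N : Type u) (SN : L.Structure N) (f : ElemEmb M N S SN) (i : _),
        ∃ (P : Type u) (SP : L.Structure P) (g : ElemEmb N P SN SP),
          Forces (Φ i) P SP (fun k => g.toFun (f.toFun (v k)))
  | _, .ex φ, M, S, v => ∃ b : M, Forces φ M S (Fin.snoc v b)
  | _, .all φ, M, S, v =>
      ∀ (N : Type u) (SN : L.Structure N) (f : ElemEmb M N S SN) (b : N),
        ∃ (P : Type u) (SP : L.Structure P) (g : ElemEmb N P SN SP),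
          Forces φ P SP (Fin.snoc (fun k => g.toFun (f.toFun (v k))) (g.toFun b))

/-- `M` decides `ψ(v)` if it strongly forces `ψ(v)` or `¬ψ(v)`. -/
def Decides {n : ℕ} (ψ : InfForm L n) (M : Type u) (S : L.Structure M) (v : Fin n → M) : Prop :=
  Forces ψ M S v ∨ Forces ψ.not M S v

/-- The weak forcing relation `A ⊩* ψ := A ⊩ ¬¬ψ`. -/
def WForces {n : ℕ} (ψ : InfForm L n) (M : Type u) (S : L.Structure M) (v : Fin n → M) : Prop :=
  Forces ψ.not.not M S v

variable (L)

/-- Finitary (`L_{ω,ω}`) formulas among the infinitary ones. -/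
inductive InfForm.IsFinitary : ∀ {n : ℕ}, InfForm L n → Prop
  | equal {n} (t₁ t₂ : L.Term (Fin n)) : IsFinitary (.equal t₁ t₂)
  | rel {n l} (R : L.Relations l) (ts : Fin l → L.Term (Fin n)) : IsFinitary (.rel R ts)
  | not {n} {φ : InfForm L n} : IsFinitary φ → IsFinitary φ.not
  | disj {n} {ι : Type u} (_ : Finite ι) {Φ : ι → InfForm L n} :
      (∀ i, IsFinitary (Φ i)) → IsFinitary (.disj Φ)
  | conj {n} {ι : Type u} (_ : Finite ι) {Φ : ι → InfForm L n} :
      (∀ i, IsFinitary (Φ i)) → IsFinitary (.conj Φ)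
  | ex {n} {φ : InfForm L (n + 1)} : IsFinitary φ → IsFinitary φ.ex
  | all {n} {φ : InfForm L (n + 1)} : IsFinitary φ → IsFinitary φ.all

/-- Quantifier-free infinitary formulas. -/
inductive InfForm.IsQF : ∀ {n : ℕ}, InfForm L n → Prop
  | equal {n} (t₁ t₂ : L.Term (Fin n)) : IsQF (.equal t₁ t₂)
  | rel {n l} (R : L.Relations l) (ts : Fin l → L.Term (Fin n)) : IsQF (.rel R ts)
  | not {n} {φ : InfForm L n} : IsQF φ → IsQF φ.not
  | disj {n} {ι : Type u} {Φ : ι → InfForm L n} : (∀ i, IsQF (Φ i)) → IsQF (.disj Φ)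
  | conj {n} {ι : Type u} {Φ : ι → InfForm L n} : (∀ i, IsQF (Φ i)) → IsQF (.conj Φ)

/-- `L_{ω₁,ω}` formulas: all conjunctions and disjunctions are countable. -/
inductive InfForm.IsCtble : ∀ {n : ℕ}, InfForm L n → Prop
  | equal {n} (t₁ t₂ : L.Term (Fin n)) : IsCtble (.equal t₁ t₂)
  | rel {n l} (R : L.Relations l) (ts : Fin l → L.Term (Fin n)) : IsCtble (.rel R ts)
  | not {n} {φ : InfForm L n} : IsCtble φ → IsCtble φ.not
  | disj {n} {ι : Type u} (_ : Countable ι) {Φ : ι → InfForm L n} :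
      (∀ i, IsCtble (Φ i)) → IsCtble (.disj Φ)
  | conj {n} {ι : Type u} (_ : Countable ι) {Φ : ι → InfForm L n} :
      (∀ i, IsCtble (Φ i)) → IsCtble (.conj Φ)
  | ex {n} {φ : InfForm L (n + 1)} : IsCtble φ → IsCtble φ.ex
  | all {n} {φ : InfForm L (n + 1)} : IsCtble φ → IsCtble φ.all

/-- A fragment of `L_{∞,ω}`: a family of sets of formulas closed under negation
and subformulas. -/
structure IsFragment (𝔸 : ∀ n : ℕ, Set (InfForm L n)) : Prop where
  not_mem : ∀ {n} {φ : InfForm L n}, φ ∈ 𝔸 n → φ.not ∈ 𝔸 n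
  of_not : ∀ {n} {φ : InfForm L n}, φ.not ∈ 𝔸 n → φ ∈ 𝔸 n
  of_disj : ∀ {n} {ι : Type u} {Φ : ι → InfForm L n}, InfForm.disj Φ ∈ 𝔸 n → ∀ i, Φ i ∈ 𝔸 n
  of_conj : ∀ {n} {ι : Type u} {Φ : ι → InfForm L n}, InfForm.conj Φ ∈ 𝔸 n → ∀ i, Φ i ∈ 𝔸 n
  of_ex : ∀ {n} {φ : InfForm L (n + 1)}, φ.ex ∈ 𝔸 n → φ ∈ 𝔸 (n + 1)
  of_all : ∀ {n} {φ : InfForm L (n + 1)}, φ.all ∈ 𝔸 n → φ ∈ 𝔸 (n + 1)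

variable {L}

/-- `G` is `𝔸`-generic if it decides every instance of every formula of `𝔸`. -/
def IsGeneric (𝔸 : ∀ n : ℕ, Set (InfForm L n)) (G : Type u) (SG : L.Structure G) : Prop :=
  ∀ (n : ℕ) (ψ : InfForm L n), ψ ∈ 𝔸 n → ∀ v : Fin n → G, Decides ψ G SG v

variable (L)

mutual
  /-- Finitary `∃ₙ` formulas: `n` alternating blocks of quantifiers beginning
  with existentials, counting finite conjunctions/disjunctions as free. -/
  inductive IsEx : ℕ → ∀ {k : ℕ}, InfForm L k → Prop
    | equal {m k} (t₁ t₂ : L.Term (Fin k)) : IsEx m (.equal t₁ t₂)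
    | rel {m k l} (R : L.Relations l) (ts : Fin l → L.Term (Fin k)) : IsEx m (.rel R ts)
    | not {m k} {φ : InfForm L k} : IsAll m φ → IsEx m φ.not
    | disj {m k} {ι : Type u} (_ : Finite ι) {Φ : ι → InfForm L k} :
        (∀ i, IsEx m (Φ i)) → IsEx m (.disj Φ)
    | conj {m k} {ι : Type u} (_ : Finite ι) {Φ : ι → InfForm L k} :
        (∀ i, IsEx m (Φ i)) → IsEx m (.conj Φ)
    | ex {m k} {φ : InfForm L (k + 1)} : IsEx m φ → 1 ≤ m → IsEx m φ.ex
    | exStep {m k} {φ : InfForm L (k + 1)} : IsAll m φ → IsEx (m + 1) φ.ex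

  /-- Finitary `∀ₙ` formulas. -/
  inductive IsAll : ℕ → ∀ {k : ℕ}, InfForm L k → Prop
    | equal {m k} (t₁ t₂ : L.Term (Fin k)) : IsAll m (.equal t₁ t₂)
    | rel {m k l} (R : L.Relations l) (ts : Fin l → L.Term (Fin k)) : IsAll m (.rel R ts)
    | not {m k} {φ : InfForm L k} : IsEx m φ → IsAll m φ.not
    | disj {m k} {ι : Type u} (_ : Finite ι) {Φ : ι → InfForm L k} :
        (∀ i, IsAll m (Φ i)) → IsAll m (.disj Φ)
    | conj {m k} {ι : Type u} (_ : Finite ι) {Φ : ι → InfForm L k} :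
        (∀ i, IsAll m (Φ i)) → IsAll m (.conj Φ)
    | all {m k} {φ : InfForm L (k + 1)} : IsAll m φ → 1 ≤ m → IsAll m φ.all
    | allStep {m k} {φ : InfForm L (k + 1)} : IsEx m φ → IsAll (m + 1) φ.all
end

/-- `f : A → B` is an `n`-elementary map (`A ⪯ₙ B` when `f` is an inclusion):
every finitary `∃ₙ` or `∀ₙ` formula transfers along `f`. -/
def IsNElemMap (n : ℕ) {A B : Type u} (SA : L.Structure A) (SB : L.Structure B)
    (f : A → B) : Prop :=
  ∀ (k : ℕ) (φ : InfForm L k), (IsEx L n φ ∨ IsAll L n φ) →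
    ∀ v : Fin k → A, Realize φ A SA v ↔ Realize φ B SB (fun i => f (v i))

/-- `f : A → B` is an elementary map: every finitary formula transfers along `f`. -/
def IsElemMap {A B : Type u} (SA : L.Structure A) (SB : L.Structure B)
    (f : A → B) : Prop :=
  ∀ (k : ℕ) (φ : InfForm L k), InfForm.IsFinitary L φ →
    ∀ v : Fin k → A, Realize φ A SA v ↔ Realize φ B SB (fun i => f (v i))

/-! Let `V` be an ultrafilter on `B → A` containing, for every `∀ₙ` formula `φ` and
parameters `t` from `B` with `B ⊨ φ(t)`, the set of left inverses `w` of `i` with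
`A ⊨ φ(w ∘ t)`. Finitely many such conditions combine into one, and a single one is met: `B`
satisfies the `∃ₙ₊₁` formula "there are `ȳ` with `φ(ȳ)` and the same equalities among `ȳ` and
the parameters from `A` as among `t` and those parameters", hence so does `A`, and its witness
`ȳ` extends to a left inverse `w` with `w ∘ t = ȳ`. In the ultrapower `C = A^(B → A) / V`,
Łoś's theorem makes the diagonal map of `A` elementary and `b ↦ [w ↦ w b]` preserve `∀ₙ`
formulas; a map preserving `∀ₙ` formulas is already `n`-elementary. -/

open FirstOrder.Language Filter Function

variable {L}

theorem _root_.Fin.append_comp_castAdd {α : Type*} {m n : ℕ} (u : Fin m → α)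
    (v : Fin n → α) :
    Fin.append u v ∘ Fin.castAdd n = u :=
  funext (Fin.append_left u v)

theorem _root_.Fin.append_comp_natAdd {α : Type*} {m n : ℕ} (u : Fin m → α)
    (v : Fin n → α) :
    Fin.append u v ∘ Fin.natAdd m = v :=
  funext (Fin.append_right u v)

namespace InfForm

def relabel : ∀ {k m : ℕ}, (Fin k → Fin m) → InfForm L k → InfForm L m
  | _, _, f, .equal t₁ t₂ => .equal (t₁.relabel f) (t₂.relabel f)
  | _, _, f, .rel R ts => .rel R fun i => (ts i).relabel f
  | _, _, f, .not φ => .not (relabel f φ)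
  | _, _, f, .disj Φ => .disj fun i => relabel f (Φ i)
  | _, _, f, .conj Φ => .conj fun i => relabel f (Φ i)
  | _, _, f, .ex φ => .ex (relabel (Fin.snoc (Fin.castSucc ∘ f) (Fin.last _)) φ)
  | _, _, f, .all φ => .all (relabel (Fin.snoc (Fin.castSucc ∘ f) (Fin.last _)) φ)

def and {k : ℕ} (φ ψ : InfForm L k) : InfForm L k :=
  .conj fun b : ULift.{u} Bool => bif b.down then φ else ψ

def eqPattern {k : ℕ} {B : Type u} (s : Fin k → B) : InfForm L k :=
  .conj fun pq : ULift.{u} {pq : Fin k × Fin k // s pq.1 = s pq.2} =>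
    .equal (.var pq.down.1.1) (.var pq.down.1.2)

def exs : ∀ (d : ℕ) {k : ℕ}, InfForm L (k + d) → InfForm L k
  | 0, _, φ => φ
  | d + 1, _, φ => exs d (.ex φ)

variable {M : Type u} (S : L.Structure M)

theorem realize_ex {k : ℕ} {φ : InfForm L (k + 1)} {v : Fin k → M} :
    Realize φ.ex M S v ↔ ∃ b, Realize φ M S (Fin.snoc v b) := Iff.rfl

theorem realize_all {k : ℕ} {φ : InfForm L (k + 1)} {v : Fin k → M} :
    Realize φ.all M S v ↔ ∀ b, Realize φ M S (Fin.snoc v b) := Iff.rfl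

theorem realize_relabel {k m : ℕ} (f : Fin k → Fin m) (φ : InfForm L k) (v : Fin m → M) :
    Realize (φ.relabel f) M S v ↔ Realize φ M S (v ∘ f) := by
  induction φ generalizing m with
  | equal t₁ t₂ => simp [relabel, Realize, Term.realize_relabel]
  | rel R ts => simp [relabel, Realize, Term.realize_relabel]
  | not φ ih => exact not_congr (ih f v)
  | disj Φ ih => exact exists_congr fun i => ih i f v
  | conj Φ ih => exact forall_congr' fun i => ih i f v
  | ex φ ih =>
      refine exists_congr fun b => (ih _ _).trans ?_
      rw [Fin.comp_snoc, ← comp_assoc, Fin.snoc_comp_castSucc, Fin.snoc_last]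
  | all φ ih =>
      refine forall_congr' fun b => (ih _ _).trans ?_
      rw [Fin.comp_snoc, ← comp_assoc, Fin.snoc_comp_castSucc, Fin.snoc_last]

theorem realize_and {k : ℕ} (φ ψ : InfForm L k) (v : Fin k → M) :
    Realize (φ.and ψ) M S v ↔ Realize φ M S v ∧ Realize ψ M S v := by
  simp [InfForm.and, Realize, ULift.forall, and_comm]

theorem realize_eqPattern {k : ℕ} {B : Type u} (s : Fin k → B) (v : Fin k → M) :
    Realize (eqPattern s) M S v ↔ ∀ p q, s p = s q → v p = v q := by
  simp [eqPattern, Realize, ULift.forall]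

theorem realize_exs : ∀ (d : ℕ) {k : ℕ} (φ : InfForm L (k + d)) (v : Fin k → M),
    Realize (exs d φ) M S v ↔ ∃ y : Fin d → M, Realize φ M S (Fin.append v y)
  | 0, _, φ, v => by simp [exs, Fin.append_right_nil]
  | d + 1, _, φ, v => by
      rw [exs, realize_exs d]
      constructor
      · rintro ⟨y, b, hb⟩
        exact ⟨Fin.snoc y b, by rwa [Fin.append_snoc]⟩
      · rintro ⟨y, hy⟩
        refine ⟨Fin.init y, realize_ex S |>.2 ⟨y (Fin.last d), ?_⟩⟩
        rwa [← Fin.append_snoc, Fin.snoc_init_self]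

end InfForm

mutual
theorem IsEx.succ {m k : ℕ} {φ : InfForm L k} : IsEx L m φ → IsEx L (m + 1) φ
  | .equal t₁ t₂ => .equal t₁ t₂
  | .rel R ts => .rel R ts
  | .not h => .not h.succ
  | .disj hι h => .disj hι fun i => (h i).succ
  | .conj hι h => .conj hι fun i => (h i).succ
  | .ex h hm => .ex h.succ (hm.trans m.le_succ)
  | .exStep h => .exStep h.succ

theorem IsAll.succ {m k : ℕ} {φ : InfForm L k} : IsAll L m φ → IsAll L (m + 1) φ
  | .equal t₁ t₂ => .equal t₁ t₂
  | .rel R ts => .rel R ts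
  | .not h => .not h.succ
  | .disj hι h => .disj hι fun i => (h i).succ
  | .conj hι h => .conj hι fun i => (h i).succ
  | .all h hm => .all h.succ (hm.trans m.le_succ)
  | .allStep h => .allStep h.succ
end

mutual
theorem IsEx.relabel {m k k' : ℕ} {φ : InfForm L k} (f : Fin k → Fin k') :
    IsEx L m φ → IsEx L m (φ.relabel f)
  | .equal t₁ t₂ => .equal _ _
  | .rel R ts => .rel R _
  | .not h => .not (h.relabel f)
  | .disj hι h => .disj hι fun i => (h i).relabel f
  | .conj hι h => .conj hι fun i => (h i).relabel f
  | .ex h hm => .ex (h.relabel _) hm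
  | .exStep h => .exStep (h.relabel _)

theorem IsAll.relabel {m k k' : ℕ} {φ : InfForm L k} (f : Fin k → Fin k') :
    IsAll L m φ → IsAll L m (φ.relabel f)
  | .equal t₁ t₂ => .equal _ _
  | .rel R ts => .rel R _
  | .not h => .not (h.relabel f)
  | .disj hι h => .disj hι fun i => (h i).relabel f
  | .conj hι h => .conj hι fun i => (h i).relabel f
  | .all h hm => .all (h.relabel _) hm
  | .allStep h => .allStep (h.relabel _)
end

mutual
theorem IsEx.isFinitary {m k : ℕ} {φ : InfForm L k} : IsEx L m φ → InfForm.IsFinitary L φ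
  | .equal t₁ t₂ => .equal t₁ t₂
  | .rel R ts => .rel R ts
  | .not h => .not h.isFinitary
  | .disj hι h => .disj hι fun i => (h i).isFinitary
  | .conj hι h => .conj hι fun i => (h i).isFinitary
  | .ex h _ => .ex h.isFinitary
  | .exStep h => .ex h.isFinitary

theorem IsAll.isFinitary {m k : ℕ} {φ : InfForm L k} : IsAll L m φ → InfForm.IsFinitary L φ
  | .equal t₁ t₂ => .equal t₁ t₂
  | .rel R ts => .rel R ts
  | .not h => .not h.isFinitary
  | .disj hι h => .disj hι fun i => (h i).isFinitary
  | .conj hι h => .conj hι fun i => (h i).isFinitary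
  | .all h _ => .all h.isFinitary
  | .allStep h => .all h.isFinitary
end

theorem IsAll.and {m k : ℕ} {φ ψ : InfForm L k} (hφ : IsAll L m φ) (hψ : IsAll L m ψ) :
    IsAll L m (φ.and ψ) :=
  .conj inferInstance fun b => by cases b with | up b => cases b <;> assumption

theorem isAll_eqPattern (m : ℕ) {k : ℕ} {B : Type u} (s : Fin k → B) :
    IsAll L m (InfForm.eqPattern s) :=
  .conj inferInstance fun _ => .equal _ _

theorem IsEx.exs {m k : ℕ} : ∀ (d : ℕ) {φ : InfForm L (k + d)}, IsEx L (m + 1) φ →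
    IsEx L (m + 1) (InfForm.exs d φ)
  | 0, _, h => h
  | d + 1, _, h => IsEx.exs d (.ex h m.succ_pos)

theorem IsAll.exs {m k : ℕ} (d : ℕ) {φ : InfForm L (k + d)} (h : IsAll L m φ) :
    IsEx L (m + 1) (InfForm.exs d φ) ∨ IsAll L (m + 1) (InfForm.exs d φ) := by
  cases d with
  | zero => exact .inr h.succ
  | succ d => exact .inl (IsEx.exs d (.exStep h))

section Transfer

variable {B C : Type u} {SB : L.Structure B} {SC : L.Structure C} {g : B → C}

mutual
theorem IsEx.realize_map {n : ℕ}
    (H : ∀ (k : ℕ) (φ : InfForm L k), IsAll L n φ → ∀ v : Fin k → B,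
      Realize φ B SB v → Realize φ C SC (g ∘ v)) {k : ℕ} {φ : InfForm L k} :
    IsEx L n φ → ∀ v : Fin k → B, Realize φ B SB v → Realize φ C SC (g ∘ v)
  | .equal t₁ t₂, v, hv => H _ _ (.equal t₁ t₂) v hv
  | .rel R ts, v, hv => H _ _ (.rel R ts) v hv
  | .not h, v, hv => fun hC => hv (h.realize_of_realize_map H v hC)
  | .disj _ h, v, hv => Exists.imp (fun i => (h i).realize_map H v) hv
  | .conj _ h, v, hv => fun i => (h i).realize_map H v (hv i)
  | .ex h _, v, hv => by
      obtain ⟨b, hb⟩ := hv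
      exact (InfForm.realize_ex SC).2 ⟨g b, Fin.comp_snoc g v b ▸ h.realize_map H _ hb⟩
  | .exStep h, v, hv => by
      obtain ⟨b, hb⟩ := hv
      exact (InfForm.realize_ex SC).2 ⟨g b, Fin.comp_snoc g v b ▸ H _ _ h.succ _ hb⟩

theorem IsAll.realize_of_realize_map {n : ℕ}
    (H : ∀ (k : ℕ) (φ : InfForm L k), IsAll L n φ → ∀ v : Fin k → B,
      Realize φ B SB v → Realize φ C SC (g ∘ v)) {k : ℕ} {φ : InfForm L k} :
    IsAll L n φ → ∀ v : Fin k → B, Realize φ C SC (g ∘ v) → Realize φ B SB v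
  | .equal t₁ t₂, v, hv => not_not.1 fun hB => H _ _ (.not (.equal t₁ t₂)) v hB hv
  | .rel R ts, v, hv => not_not.1 fun hB => H _ _ (.not (.rel R ts)) v hB hv
  | .not h, v, hv => fun hB => hv (h.realize_map H v hB)
  | .disj _ h, v, hv => Exists.imp (fun i => (h i).realize_of_realize_map H v) hv
  | .conj _ h, v, hv => fun i => (h i).realize_of_realize_map H v (hv i)
  | .all h _, v, hv => fun b =>
      h.realize_of_realize_map H _ (Fin.comp_snoc g v b ▸ (InfForm.realize_all SC).1 hv (g b))
  | .allStep h, v, hv => fun b => not_not.1 fun hB =>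
      H _ _ (IsAll.not h).succ _ hB (Fin.comp_snoc g v b ▸ (InfForm.realize_all SC).1 hv (g b))
end

theorem isNElemMap_of_realize_isAll {n : ℕ}
    (H : ∀ (k : ℕ) (φ : InfForm L k), IsAll L n φ → ∀ v : Fin k → B,
      Realize φ B SB v → Realize φ C SC (g ∘ v)) :
    IsNElemMap L n SB SC g := by
  rintro k φ (hφ | hφ) v
  · exact ⟨hφ.realize_map H v, fun hC => not_not.1 fun hB => H _ _ (.not hφ) v hB hC⟩
  · exact ⟨H _ _ hφ v, hφ.realize_of_realize_map H v⟩

end Transfer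

theorem InfForm.IsFinitary.exists_boundedFormula {k : ℕ} {φ : InfForm L k}
    (hφ : InfForm.IsFinitary L φ) :
    ∃ ψ : L.BoundedFormula Empty k, ∀ (M : Type u) [S : L.Structure M] (e : Empty → M)
      (v : Fin k → M), Realize φ M S v ↔ ψ.Realize e v := by
  induction hφ with
  | equal t₁ t₂ =>
      exact ⟨(t₁.relabel Sum.inr).bdEqual (t₂.relabel Sum.inr), fun M _ e v => by
        simp [Realize, Term.realize_relabel]⟩
  | rel R ts =>
      exact ⟨R.boundedFormula fun j => (ts j).relabel Sum.inr, fun M _ e v => by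
        simp [Realize, Term.realize_relabel]⟩
  | not _ ih =>
      obtain ⟨ψ, hψ⟩ := ih
      exact ⟨ψ.not, fun M _ e v => not_congr (hψ M e v)⟩
  | disj hι _ ih =>
      choose ψ hψ using ih
      exact ⟨BoundedFormula.iSup ψ, fun M _ e v => (exists_congr fun j => hψ j M e v).trans
        BoundedFormula.realize_iSup.symm⟩
  | conj hι _ ih =>
      choose ψ hψ using ih
      exact ⟨BoundedFormula.iInf ψ, fun M _ e v => (forall_congr' fun j => hψ j M e v).trans
        BoundedFormula.realize_iInf.symm⟩
  | ex _ ih =>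
      obtain ⟨ψ, hψ⟩ := ih
      exact ⟨ψ.ex, fun M _ e v =>
        (exists_congr fun b => hψ M e _).trans BoundedFormula.realize_ex.symm⟩
  | all _ ih =>
      obtain ⟨ψ, hψ⟩ := ih
      exact ⟨ψ.all, fun M _ e v =>
        (forall_congr' fun b => hψ M e _).trans BoundedFormula.realize_all.symm⟩

theorem InfForm.IsFinitary.realize_ultrapower {J A : Type u} [SA : L.Structure A] [Nonempty A]
    {V : Ultrafilter J} {k : ℕ} {φ : InfForm L k} (hφ : InfForm.IsFinitary L φ)
    (F : Fin k → J → A) :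
    Realize φ ((V : Filter J).Product fun _ => A) inferInstance
        (fun p => (F p : (V : Filter J).Product fun _ => A)) ↔
      ∀ᶠ j in (V : Filter J), Realize φ A SA (fun p => F p j) := by
  obtain ⟨ψ, hψ⟩ := hφ.exists_boundedFormula
  exact (hψ _ _ _).trans <| (Ultraproduct.boundedFormula_realize_cast ψ Empty.elim F).trans <|
    eventually_congr <| .of_forall fun j => (hψ _ _ _).symm

section ElemMap

variable {n : ℕ} {A B : Type u} {SA : L.Structure A} {SB : L.Structure B} {i : A → B}

theorem IsNElemMap.injective (hi : IsNElemMap L n SA SB i) : Injective i := fun a a' h =>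
  (hi 2 (.equal (.var 0) (.var 1)) (.inl (.equal _ _)) ![a, a']).2 (by simpa [Realize] using h)

theorem IsNElemMap.nonempty (hi : IsNElemMap L (n + 1) SA SB i) [h : Nonempty B] :
    Nonempty A := by
  obtain ⟨b⟩ := h
  obtain ⟨a, -⟩ := (hi 0 (.ex (.equal (.var 0) (.var 0))) (.inl (.exStep (.equal _ _)))
    Fin.elim0).2 ⟨b, rfl⟩
  exact ⟨a⟩

theorem IsNElemMap.isElemMap_of_isEmpty [IsEmpty B] (hi : IsNElemMap L n SA SB i) :
    IsElemMap L SA SB i := by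
  have : IsEmpty A := i.isEmpty
  suffices ∀ {k} (φ : InfForm L k) (v : Fin k → A),
      Realize φ A SA v ↔ Realize φ B SB (i ∘ v)
    from fun _ φ _ => this φ
  intro k φ
  induction φ with
  | equal t₁ t₂ => exact hi _ _ (.inl (.equal _ _))
  | rel R ts => exact hi _ _ (.inl (.rel _ _))
  | not φ ih => exact fun v => not_congr (ih v)
  | disj Φ ih => exact fun v => exists_congr fun j => ih j v
  | conj Φ ih => exact fun v => forall_congr' fun j => ih j v
  | ex φ => simp [InfForm.realize_ex]
  | all φ => simp [InfForm.realize_all]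

theorem exists_leftInverse_comp_eq [Nonempty A] (hi : Injective i) {k : ℕ} {t : Fin k → B}
    {y : Fin k → A} (hy : ∀ p q, t p = t q → y p = y q)
    (hyi : ∀ p a, t p = i a → y p = a) :
    ∃ w : B → A, LeftInverse w i ∧ w ∘ t = y := by
  classical
  refine ⟨fun b => if h : ∃ p, t p = b then y h.choose else invFun i b, fun a => ?_,
    funext fun p => ?_⟩
  · dsimp only
    split_ifs with h
    · exact hyi _ _ h.choose_spec
    · exact leftInverse_invFun hi a
  · have h : ∃ q, t q = t p := ⟨p, rfl⟩
    simp only [comp_apply, dif_pos h]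
    exact hy _ _ h.choose_spec

theorem IsNElemMap.exists_leftInverse_realize [Nonempty A] (hi : IsNElemMap L (n + 1) SA SB i)
    {k : ℕ} {φ : InfForm L k} (hφ : IsAll L n φ) {t : Fin k → B} (ht : Realize φ B SB t) :
    ∃ w : B → A, LeftInverse w i ∧ Realize φ A SA (w ∘ t) := by
  -- `x p` is a preimage of `t p` whenever `t p` lies in the image of `i`
  set x : Fin k → A := fun p => invFun i (t p)
  set s : Fin (k + k) → B := Fin.append (i ∘ x) t
  set χ : InfForm L (k + k) := (φ.relabel (Fin.natAdd k)).and (InfForm.eqPattern s)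
  have hχ : IsAll L n χ := (hφ.relabel _).and (isAll_eqPattern n s)
  have hB : Realize (InfForm.exs k χ) B SB (i ∘ x) := by
    refine (InfForm.realize_exs _ k χ _).2 ⟨t, (InfForm.realize_and _ _ _ _).2
      ⟨?_, (InfForm.realize_eqPattern _ s _).2 fun _ _ h => h⟩⟩
    rwa [InfForm.realize_relabel, Fin.append_comp_natAdd]
  obtain ⟨y, hyφ, hys⟩ : ∃ y : Fin k → A, Realize φ A SA y ∧
      ∀ p q, s p = s q → Fin.append x y p = Fin.append x y q := by
    simpa [InfForm.realize_exs, χ, InfForm.realize_relabel, InfForm.realize_and,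
      InfForm.realize_eqPattern, Fin.append_comp_natAdd] using (hi k _ (hχ.exs k) x).2 hB
  have hy (p q : Fin k) (h : t p = t q) : y p = y q := by
    simpa only [Fin.append_right] using
      hys (Fin.natAdd k p) (Fin.natAdd k q) (by simpa only [s, Fin.append_right])
  have hyi (p : Fin k) (a : A) (h : t p = i a) : y p = a := by
    have hx : i (x p) = t p := invFun_eq ⟨a, h.symm⟩
    have hxy : x p = y p := by
      simpa only [Fin.append_left, Fin.append_right] using
        hys (Fin.castAdd k p) (Fin.natAdd k p)
          (by simpa only [s, Fin.append_left, Fin.append_right])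
    exact hxy ▸ hi.injective (hx.trans h)
  obtain ⟨w, hw, hwt⟩ := exists_leftInverse_comp_eq hi.injective hy hyi
  exact ⟨w, hw, hwt ▸ hyφ⟩

structure TrueAllFormula (n : ℕ) {B : Type u} (SB : L.Structure B) where
  k : ℕ
  φ : InfForm L k
  t : Fin k → B
  isAll : IsAll L n φ
  realize : Realize φ B SB t

def TrueAllFormula.and (c d : TrueAllFormula n SB) : TrueAllFormula n SB where
  k := c.k + d.k
  φ := (c.φ.relabel (Fin.castAdd d.k)).and (d.φ.relabel (Fin.natAdd c.k))
  t := Fin.append c.t d.t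
  isAll := (c.isAll.relabel _).and (d.isAll.relabel _)
  realize := by
    simpa only [InfForm.realize_and, InfForm.realize_relabel, Fin.append_comp_castAdd,
      Fin.append_comp_natAdd] using ⟨c.realize, d.realize⟩

theorem TrueAllFormula.realize_and {M : Type u} (S : L.Structure M) (c d : TrueAllFormula n SB)
    (w : B → M) :
    Realize (c.and d).φ M S (w ∘ (c.and d).t) ↔
      Realize c.φ M S (w ∘ c.t) ∧ Realize d.φ M S (w ∘ d.t) := by
  simp only [TrueAllFormula.and, InfForm.realize_and, InfForm.realize_relabel, comp_assoc,
    Fin.append_comp_castAdd, Fin.append_comp_natAdd]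

theorem IsNElemMap.exists_ultrafilter [Nonempty A] (hi : IsNElemMap L (n + 1) SA SB i) :
    ∃ V : Ultrafilter (B → A), {w | LeftInverse w i} ∈ V ∧
      ∀ (k : ℕ) (φ : InfForm L k), IsAll L n φ → ∀ t : Fin k → B, Realize φ B SB t →
        ∀ᶠ w in (V : Filter (B → A)), Realize φ A SA (w ∘ t) := by
  let S (c : TrueAllFormula n SB) : Set (B → A) :=
    {w | LeftInverse w i ∧ Realize c.φ A SA (w ∘ c.t)}
  have hdir : Directed (· ≥ ·) fun c => 𝓟 (S c) := fun c d =>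
    ⟨c.and d, principal_mono.2 fun w hw => ⟨hw.1, ((c.realize_and SA d w).1 hw.2).1⟩,
      principal_mono.2 fun w hw => ⟨hw.1, ((c.realize_and SA d w).1 hw.2).2⟩⟩
  have : (⨅ c, 𝓟 (S c)).NeBot := iInf_neBot_of_directed hdir fun c =>
    principal_neBot_iff.2 (hi.exists_leftInverse_realize c.isAll c.realize)
  have hS (c : TrueAllFormula n SB) : S c ∈ Ultrafilter.of (⨅ c, 𝓟 (S c)) :=
    Ultrafilter.of_le _ (mem_iInf_of_mem c (mem_principal_self _))
  refine ⟨Ultrafilter.of _, ?_, fun k φ hφ t ht =>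
    mem_of_superset (hS ⟨k, φ, t, hφ, ht⟩) fun w hw => hw.2⟩
  obtain ⟨a⟩ := ‹Nonempty A›
  exact mem_of_superset (hS ⟨1, .equal (.var 0) (.var 0), fun _ => i a, .equal _ _, rfl⟩)
    fun w hw => hw.1

end ElemMap

/-- If `A ⪯ₙ₊₁ B`, then there is a structure `C` such that `B` embeds
`n`-elementarily into `C` and `A` embeds elementarily into `C`, compatibly with
the inclusion of `A` into `B`. -/
theorem stmt3 {L : FirstOrder.Language.{u, u}} (n : ℕ) {A B : Type u}
    (SA : L.Structure A) (SB : L.Structure B)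
    (i : A → B) (hi : IsNElemMap L (n + 1) SA SB i) :
    ∃ (C : Type u) (SC : L.Structure C) (g : B → C) (h : A → C),
      IsNElemMap L n SB SC g ∧ IsElemMap L SA SC h ∧
      ∀ a : A, g (i a) = h a := by
  rcases isEmpty_or_nonempty B with _ | _
  · exact ⟨B, SB, id, i, fun _ _ _ _ => Iff.rfl, hi.isElemMap_of_isEmpty, fun _ => rfl⟩
  have := hi.nonempty
  obtain ⟨V, hVi, hVφ⟩ := hi.exists_ultrafilter
  let := SA
  refine ⟨(V : Filter (B → A)).Product fun _ => A, inferInstance,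
    fun b => ((fun w => w b : (B → A) → A) : _), fun a => ((fun _ => a : (B → A) → A) : _),
    ?_, ?_, fun a => ?_⟩
  · exact isNElemMap_of_realize_isAll fun k φ hφ t ht =>
      (hφ.isFinitary.realize_ultrapower _).2 (hVφ k φ hφ t ht)
  · exact fun k φ hφ v => ((hφ.realize_ultrapower _).trans eventually_const).symm
  · exact Quotient.sound (mem_of_superset hVi fun w hw => hw a)

end InfinitaryForcing
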